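/- Let X and Y be complex Banach spaces, U : X → Y a non-null bounded linear operator with ‖U‖ < λ. Then for every n ∈ ℕ: A_λ(B_{ℓ^n_1},1,U) = K_λ(𝔻,1,U)/n. -/

import Mathlib

open scoped BigOperators ENNReal NNReal Pointwise
open Finset

noncomputable section

namespace ArithBohr

/-- The monomial `z ^ α` on `ℂ^n`. -/
def mono {n : ℕ} (z : Fin n → ℂ) (α : Fin n → ℕ) : ℂ := ∏ i, z i ^ α i

/-- The real monomial `r ^ α`. -/
def monoR {n : ℕ} (r : Fin n → ℝ) (α : Fin n → ℕ) : ℝ := ∏ i, r i ^ α i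

/-- `‖f‖_Ω = sup_{z ∈ Ω} ‖f z‖`. -/
def supNorm {n : ℕ} {E : Type*} [Norm E] (Ω : Set (Fin n → ℂ)) (f : (Fin n → ℂ) → E) : ℝ :=
  ⨆ z : Ω, ‖f z.1‖

/-- `f` is bounded on `Ω`. -/
def IsBoundedOn {n : ℕ} {E : Type*} [Norm E] (Ω : Set (Fin n → ℂ)) (f : (Fin n → ℂ) → E) :
    Prop :=
  ∃ M : ℝ, ∀ z ∈ Ω, ‖f z‖ ≤ M

/-- A complete Reinhardt set in `ℂ^n`. -/
def IsCompleteReinhardt {n : ℕ} (Ω : Set (Fin n → ℂ)) : Prop :=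
  ∀ z ∈ Ω, ∀ ξ : Fin n → ℂ, (∀ i, ‖ξ i‖ ≤ 1) → (fun i => ξ i * z i) ∈ Ω

/-- The `ℓ_q` norm on `ℂ^n`, `q ∈ [1,∞]` (as an extended real exponent). -/
def lqNorm {n : ℕ} (q : ℝ≥0∞) (z : Fin n → ℂ) : ℝ :=
  if q = ∞ then ⨆ i, ‖z i‖ else (∑ i, ‖z i‖ ^ q.toReal) ^ (1 / q.toReal)

/-- The `ℓ_q` norm on `ℂ^n` for a real exponent `1 ≤ q < ∞`. -/
def lqNormR {n : ℕ} (q : ℝ) (z : Fin n → ℂ) : ℝ := (∑ i, ‖z i‖ ^ q) ^ (1 / q)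

/-- The open unit ball of `ℓ^n_q`. -/
def lqBall (n : ℕ) (q : ℝ≥0∞) : Set (Fin n → ℂ) := {z | lqNorm q z < 1}

/-- The open unit ball of `ℓ^n_q` for a real exponent. -/
def lqBallR (n : ℕ) (q : ℝ) : Set (Fin n → ℂ) := {z | lqNormR q z < 1}

/-- The open unit ball of `ℓ^n_1`. -/
def l1Ball (n : ℕ) : Set (Fin n → ℂ) := {z | ∑ i, ‖z i‖ < 1}

/-- `S(Ω₁, Ω₂) = inf {s > 0 : Ω₁ ⊆ s Ω₂}`. -/
def Sdist {n : ℕ} (Ω₁ Ω₂ : Set (Fin n → ℂ)) : ℝ := sInf {s : ℝ | 0 < s ∧ Ω₁ ⊆ s • Ω₂}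

/-- A norm on `ℂ^n` for which the canonical basis is `1`-unconditional. -/
structure UncondNorm (n : ℕ) where
  N : (Fin n → ℂ) → ℝ
  eq_zero_iff : ∀ z, N z = 0 ↔ z = 0
  add_le : ∀ z w, N (z + w) ≤ N z + N w
  smul_eq : ∀ (c : ℂ) (z), N (c • z) = ‖c‖ * N z
  uncond : ∀ ξ z : Fin n → ℂ, (∀ i, ‖ξ i‖ ≤ 1) → N (fun i => ξ i * z i) ≤ N z

namespace UncondNorm

variable {n : ℕ} (Z : UncondNorm n)

/-- The open unit ball `B_Z`. -/
def ball : Set (Fin n → ℂ) := {z | Z.N z < 1}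

/-- `‖Id : Z → ℓ^n_q‖ = sup_{z ∈ B_Z} ‖z‖_q`. -/
def toLq (q : ℝ≥0∞) : ℝ := ⨆ z : Z.ball, lqNorm q z.1

/-- `‖Id : ℓ^n_q → Z‖ = sup_{‖z‖_q ≤ 1} ‖z‖_Z`. -/
def fromLq (q : ℝ≥0∞) : ℝ := ⨆ z : {w : Fin n → ℂ | lqNorm q w ≤ 1}, Z.N z.1

/-- `‖Id : Z → ℓ^n_1‖ = sup_{z ∈ B_Z} Σ_i |z_i|`. -/
def toL1 : ℝ := ⨆ z : Z.ball, ∑ i, ‖z.1 i‖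

/-- `‖Id : ℓ^n_2 → Z‖`. -/
def fromL2 : ℝ := ⨆ z : {w : Fin n → ℂ | Real.sqrt (∑ i, ‖w i‖ ^ 2) ≤ 1}, Z.N z.1

/-- `sup_{z ∈ B_Z} ‖z‖_p` for a real exponent `p`. -/
def supLp (p : ℝ) : ℝ := ⨆ z : Z.ball, lqNormR p z.1

end UncondNorm

section Pluriharmonic

variable {n : ℕ} {H : Type*} [NormedAddCommGroup H] [InnerProductSpace ℂ H] [CompleteSpace H]
variable {Y : Type*} [NormedAddCommGroup Y] [NormedSpace ℂ Y]

/-- `f : Ω → B(H)` is (representable as) a pluriharmonic function with coefficient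
families `a`, `b`:  `f z = Σ_α a_α z^α + Σ_{|α| ≥ 1} b_α^* z̄^α` on `Ω`. -/
def Represents (Ω : Set (Fin n → ℂ)) (f : (Fin n → ℂ) → (H →L[ℂ] H))
    (a b : (Fin n → ℕ) → (H →L[ℂ] H)) : Prop :=
  b 0 = 0 ∧ ∀ z ∈ Ω,
    Summable (fun α => mono z α • a α) ∧
    Summable (fun α => mono (star z) α • (ContinuousLinearMap.adjoint (b α))) ∧
    f z = (∑' α, mono z α • a α) +
      ∑' α, mono (star z) α • (ContinuousLinearMap.adjoint (b α))

/-- The class `PH(Ω, B(H))` of bounded pluriharmonic functions (with their coefficients). -/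
def ClsPH (Ω : Set (Fin n → ℂ)) (f : (Fin n → ℂ) → (H →L[ℂ] H))
    (a b : (Fin n → ℕ) → (H →L[ℂ] H)) : Prop :=
  Represents Ω f a b ∧ IsBoundedOn Ω f

/-- The class `PH(^mΩ, B(H))` of `m`-homogeneous pluriharmonic polynomials. -/
def ClsHomog (Ω : Set (Fin n → ℂ)) (m : ℕ) (f : (Fin n → ℂ) → (H →L[ℂ] H))
    (a b : (Fin n → ℕ) → (H →L[ℂ] H)) : Prop :=
  ClsPH Ω f a b ∧ ∀ α : Fin n → ℕ, (∑ i, α i) ≠ m → a α = 0 ∧ b α = 0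

/-- The class `∪_{m ≥ 1} PH(^mΩ, B(H))`. -/
def ClsHomogUnion (Ω : Set (Fin n → ℂ)) (f : (Fin n → ℂ) → (H →L[ℂ] H))
    (a b : (Fin n → ℕ) → (H →L[ℂ] H)) : Prop :=
  ∃ m : ℕ, 1 ≤ m ∧ ClsHomog Ω m f a b

/-- The class `PH*(Ω, B(H))` of bounded pluriharmonic `f` with `f(0) = μ I`,
`μ ∈ [0, ‖f‖_Ω]`. -/
def ClsPHStar (Ω : Set (Fin n → ℂ)) (f : (Fin n → ℂ) → (H →L[ℂ] H))
    (a b : (Fin n → ℕ) → (H →L[ℂ] H)) : Prop :=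
  ClsPH Ω f a b ∧ ∃ μ : ℝ, 0 ≤ μ ∧ μ ≤ supNorm Ω f ∧ f 0 = (μ : ℂ) • (1 : H →L[ℂ] H)

/-- The vector `r ∈ ℝ^n_{≥0}` witnesses the arithmetic Bohr inequality for the class `Cls`:
`Σ_α (‖U a_α‖^p + ‖U b_α‖^p) r^{pα} ≤ λ^p ‖f‖_Ω^p` for every `f` in the class. -/
def GoodVec (Ω : Set (Fin n → ℂ)) (p lam : ℝ) (U : (H →L[ℂ] H) →L[ℂ] Y)
    (Cls : ((Fin n → ℂ) → (H →L[ℂ] H)) → ((Fin n → ℕ) → (H →L[ℂ] H)) →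
      ((Fin n → ℕ) → (H →L[ℂ] H)) → Prop) (r : Fin n → ℝ) : Prop :=
  ∀ f a b, Cls f a b → ∀ F : Finset (Fin n → ℕ),
    ∑ α ∈ F, (‖U (a α)‖ ^ p + ‖U (b α)‖ ^ p) * monoR r α ^ p ≤ lam ^ p * supNorm Ω f ^ p

/-- The `λ_p`-arithmetic Bohr radius of `Ω` with respect to a class of pluriharmonic
functions. -/
def APgen (Ω : Set (Fin n → ℂ)) (p lam : ℝ) (U : (H →L[ℂ] H) →L[ℂ] Y)
    (Cls : ((Fin n → ℂ) → (H →L[ℂ] H)) → ((Fin n → ℕ) → (H →L[ℂ] H)) →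
      ((Fin n → ℕ) → (H →L[ℂ] H)) → Prop) : ℝ :=
  sSup {t : ℝ | ∃ r : Fin n → ℝ, (∀ i, 0 ≤ r i) ∧ GoodVec Ω p lam U Cls r ∧
    t = (∑ i, r i) / n}

/-- The `λ_p`-arithmetic Bohr radius `AP_λ(Ω, p, U)`. -/
def APradius (Ω : Set (Fin n → ℂ)) (p lam : ℝ) (U : (H →L[ℂ] H) →L[ℂ] Y) : ℝ :=
  APgen Ω p lam U (ClsPH Ω)

/-- The `λ`-powered Bohr radius `R_λ(Ω, p, U)`. -/
def BohrRadius (Ω : Set (Fin n → ℂ)) (p lam : ℝ) (U : (H →L[ℂ] H) →L[ℂ] Y) : ℝ :=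
  sSup {r : ℝ | 0 ≤ r ∧ ∀ f a b, ClsPH Ω f a b → ∀ z ∈ Ω, ∀ F : Finset (Fin n → ℕ),
    ∑ α ∈ F, (‖U (a α)‖ ^ p + ‖U (b α)‖ ^ p) * ‖mono (r • z) α‖ ^ p
      ≤ lam ^ p * supNorm Ω f ^ p}

/-- `sup_{|z| < 1} ‖f z‖`. -/
def supNormDisk {E : Type*} [Norm E] (f : ℂ → E) : ℝ := ⨆ z : {w : ℂ // ‖w‖ < 1}, ‖f z.1‖

/-- `f` is bounded on the unit disk. -/
def IsBoundedOnDisk {E : Type*} [Norm E] (f : ℂ → E) : Prop :=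
  ∃ M : ℝ, ∀ z : ℂ, ‖z‖ < 1 → ‖f z‖ ≤ M

/-- `f : 𝔻 → B(H)` is pluriharmonic with coefficients `a`, `b`:
`f z = Σ_m a_m z^m + Σ_{m ≥ 1} b_m^* z̄^m`. -/
def RepresentsDisk (f : ℂ → (H →L[ℂ] H)) (a b : ℕ → (H →L[ℂ] H)) : Prop :=
  b 0 = 0 ∧ ∀ z : ℂ, ‖z‖ < 1 →
    Summable (fun m => z ^ m • a m) ∧
    Summable (fun m => (starRingEnd ℂ z) ^ m • (ContinuousLinearMap.adjoint (b m))) ∧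
    f z = (∑' m, z ^ m • a m) +
      ∑' m, (starRingEnd ℂ z) ^ m • (ContinuousLinearMap.adjoint (b m))

/-- The one-dimensional `λ`-powered Bohr radius `R_λ(𝔻, p, U)`. -/
def BohrRadiusDisk (p lam : ℝ) (U : (H →L[ℂ] H) →L[ℂ] Y) : ℝ :=
  sSup {r : ℝ | 0 ≤ r ∧ ∀ f a b, RepresentsDisk f a b → IsBoundedOnDisk f →
    ∀ F : Finset ℕ, ∑ m ∈ F, (‖U (a m)‖ ^ p + ‖U (b m)‖ ^ p) * r ^ ((m : ℝ) * p)
      ≤ lam ^ p * supNormDisk f ^ p}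

end Pluriharmonic

section Scalar

variable {n : ℕ}

/-- A complex-valued harmonic function on the unit disk, via its representation
`f z = Σ_m a_m z^m + conj (Σ_{m ≥ 1} b_m z^m)`. -/
def RepresentsDiskC (f : ℂ → ℂ) (a b : ℕ → ℂ) : Prop :=
  b 0 = 0 ∧ ∀ z : ℂ, ‖z‖ < 1 →
    Summable (fun m => a m * z ^ m) ∧ Summable (fun m => b m * z ^ m) ∧
    f z = (∑' m, a m * z ^ m) + starRingEnd ℂ (∑' m, b m * z ^ m)

/-- The scalar one-dimensional Bohr radius `R_λ(𝔻, 1, ℂ)` for harmonic functions. -/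
def BohrRadiusDiskC (lam : ℝ) : ℝ :=
  sSup {r : ℝ | 0 ≤ r ∧ ∀ f a b, RepresentsDiskC f a b → IsBoundedOnDisk f →
    ∀ F : Finset ℕ, ∑ m ∈ F, (‖a m‖ + ‖b m‖) * r ^ m ≤ lam * supNormDisk f}

/-- A complex-valued pluriharmonic function on `Ω ⊆ ℂ^n`, via its representation
`f z = Σ_α a_α z^α + conj (Σ_{|α| ≥ 1} b_α z^α)`. -/
def RepresentsC (Ω : Set (Fin n → ℂ)) (f : (Fin n → ℂ) → ℂ) (a b : (Fin n → ℕ) → ℂ) :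
    Prop :=
  b 0 = 0 ∧ ∀ z ∈ Ω,
    Summable (fun α => a α * mono z α) ∧ Summable (fun α => b α * mono z α) ∧
    f z = (∑' α, a α * mono z α) + starRingEnd ℂ (∑' α, b α * mono z α)

/-- The scalar arithmetic Bohr radius `AP_λ(Ω, 1, ℂ)` for pluriharmonic functions. -/
def APradiusC (Ω : Set (Fin n → ℂ)) (lam : ℝ) : ℝ :=
  sSup {t : ℝ | ∃ r : Fin n → ℝ, (∀ i, 0 ≤ r i) ∧
    (∀ f a b, RepresentsC Ω f a b → IsBoundedOn Ω f →
      ∀ F : Finset (Fin n → ℕ), ∑ α ∈ F, (‖a α‖ + ‖b α‖) * monoR r α ≤ lam * supNorm Ω f) ∧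
    t = (∑ i, r i) / n}

end Scalar

section Holomorphic

variable {n : ℕ} {X : Type*} [NormedAddCommGroup X] [NormedSpace ℂ X]
variable {Y : Type*} [NormedAddCommGroup Y] [NormedSpace ℂ Y]

/-- `f : Ω → X` has the monomial expansion `f z = Σ_α a_α z^α` on `Ω`. -/
def RepresentsHol (Ω : Set (Fin n → ℂ)) (f : (Fin n → ℂ) → X)
    (a : (Fin n → ℕ) → X) : Prop :=
  ∀ z ∈ Ω, HasSum (fun α => mono z α • a α) (f z)

/-- The `λ`-powered Bohr radius `K_λ(Ω, p, U)` for holomorphic functions. -/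
def Kradius (Ω : Set (Fin n → ℂ)) (p lam : ℝ) (U : X →L[ℂ] Y) : ℝ :=
  sSup {r : ℝ | 0 ≤ r ∧ ∀ f a, RepresentsHol Ω f a → IsBoundedOn Ω f →
    ∀ z ∈ Ω, ∀ F : Finset (Fin n → ℕ),
      ∑ α ∈ F, ‖mono (r • z) α • U (a α)‖ ^ p ≤ lam ^ p * supNorm Ω f ^ p}

/-- The `λ_p`-arithmetic Bohr radius `A_λ(Ω, p, U)` for holomorphic functions. -/
def Aradius (Ω : Set (Fin n → ℂ)) (p lam : ℝ) (U : X →L[ℂ] Y) : ℝ :=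
  sSup {t : ℝ | ∃ r : Fin n → ℝ, (∀ i, 0 ≤ r i) ∧
    (∀ f a, RepresentsHol Ω f a → IsBoundedOn Ω f →
      ∀ F : Finset (Fin n → ℕ),
        ∑ α ∈ F, ‖U (a α)‖ ^ p * monoR r α ^ p ≤ lam ^ p * supNorm Ω f ^ p) ∧
    t = (∑ i, r i) / n}

/-- `f : 𝔻 → X` has the power-series expansion `f z = Σ_m a_m z^m`. -/
def RepresentsHolDisk (f : ℂ → X) (a : ℕ → X) : Prop :=
  ∀ z : ℂ, ‖z‖ < 1 → HasSum (fun m => z ^ m • a m) (f z)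

/-- The one-dimensional `λ`-powered Bohr radius `K_λ(𝔻, p, U)`. -/
def KradiusDisk (p lam : ℝ) (U : X →L[ℂ] Y) : ℝ :=
  sSup {r : ℝ | 0 ≤ r ∧ ∀ f a, RepresentsHolDisk f a → IsBoundedOnDisk f →
    ∀ F : Finset ℕ, ∑ m ∈ F, ‖U (a m)‖ ^ p * r ^ ((m : ℝ) * p) ≤ lam ^ p * supNormDisk f ^ p}

end Holomorphic

/-- `X` has cotype `t ∈ [2, ∞)`. -/
def HasCotype (X : Type*) [NormedAddCommGroup X] (t : ℝ) : Prop :=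
  ∃ C : ℝ, 0 < C ∧ ∀ (m : ℕ) (x : Fin m → X),
    (∑ k, ‖x k‖ ^ t) ^ (1 / t) ≤
      C * Real.sqrt ((2 ^ m : ℝ)⁻¹ * ∑ ε : Fin m → Bool, ‖∑ k, (if ε k then x k else -x k)‖ ^ 2)

/-- `Cot(X) = inf {t ∈ [2, ∞] : X has cotype t}` (every space has cotype `∞`). -/
def cotype (X : Type*) [NormedAddCommGroup X] : ℝ≥0∞ :=
  sInf {t : ℝ≥0∞ | 2 ≤ t ∧ (t ≠ ∞ → HasCotype X t.toReal)}

/-- `X` has cotype `t ∈ [2, ∞]` (extended-real exponent; cotype `∞` always holds). -/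
def HasCotypeE (X : Type*) [NormedAddCommGroup X] (t : ℝ≥0∞) : Prop :=
  t = ∞ ∨ HasCotype X t.toReal

/-- The constant `D` of Theorem 1.1 / Theorem `thm-1.8-atm`. -/
def Dconst (p lam u : ℝ) : ℝ :=
  if (4 * lam * (2 : ℝ) ^ (1 / p))⁻¹ ≤ u then
    max ((4 * lam * (2 : ℝ) ^ (1 / p))⁻¹ * ((lam ^ p - u ^ p) / (2 * lam ^ p - u ^ p)) ^ (1 / p))
      ((4 * lam * (2 : ℝ) ^ (1 / p))⁻¹ *
        ((lam ^ p - u ^ p) / (lam ^ p - u ^ p + 1)) ^ (1 / p) * u⁻¹)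
  else
    max ((4 * lam * (2 : ℝ) ^ (1 / p))⁻¹ * ((lam ^ p - u ^ p) / (2 * lam ^ p - u ^ p)) ^ (1 / p))
      ((4 * lam * (2 : ℝ) ^ (1 / p))⁻¹ * ((lam ^ p - u ^ p) / (lam ^ p - u ^ p + 1)) ^ (1 / p))

end ArithBohr

namespace ArithBohr

section Cor19Aux

variable {X : Type*} [NormedAddCommGroup X] [NormedSpace ℂ X] [CompleteSpace X]
variable {Y : Type*} [NormedAddCommGroup Y] [NormedSpace ℂ Y] [CompleteSpace Y]

lemma norm_le_supNorm' {n : ℕ} {E : Type*} [SeminormedAddCommGroup E]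
    {Ω : Set (Fin n → ℂ)} {f : (Fin n → ℂ) → E} (h : IsBoundedOn Ω f)
    {z : Fin n → ℂ} (hz : z ∈ Ω) : ‖f z‖ ≤ supNorm Ω f := by
  obtain ⟨M, hM⟩ := h
  have hb : BddAbove (Set.range fun z : Ω => ‖f z.1‖) :=
    ⟨M, by rintro _ ⟨w, rfl⟩; exact hM w.1 w.2⟩
  exact le_ciSup hb ⟨z, hz⟩

lemma norm_le_supNormDisk' {E : Type*} [SeminormedAddCommGroup E]
    {f : ℂ → E} (h : IsBoundedOnDisk f) {w : ℂ} (hw : ‖w‖ < 1) :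
    ‖f w‖ ≤ supNormDisk f := by
  obtain ⟨M, hM⟩ := h
  have hb : BddAbove (Set.range fun w : {w : ℂ // ‖w‖ < 1} => ‖f w.1‖) :=
    ⟨M, by rintro _ ⟨v, rfl⟩; exact hM v.1 v.2⟩
  exact le_ciSup hb ⟨w, hw⟩

/-- fiber has sum over piAntidiag -/
lemma hasSum_fiber' {n m : ℕ} {E : Type*} [AddCommMonoid E] [TopologicalSpace E]
    (φ : (Fin n → ℕ) → E) :
    HasSum (fun α : {α : Fin n → ℕ // ∑ i, α i = m} => φ α.1)
      (∑ α ∈ Finset.piAntidiag Finset.univ m, φ α) := by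
  classical
  have h1 : ∀ α ∉ Finset.piAntidiag (Finset.univ : Finset (Fin n)) m,
      Set.indicator {α : Fin n → ℕ | ∑ i, α i = m} φ α = 0 := by
    intro α hα
    apply Set.indicator_of_notMem
    simp only [Finset.mem_piAntidiag] at hα
    intro hmem
    exact hα ⟨hmem, fun i _ => Finset.mem_univ i⟩
  have h2 : HasSum (Set.indicator {α : Fin n → ℕ | ∑ i, α i = m} φ)
      (∑ α ∈ Finset.piAntidiag Finset.univ m,
        Set.indicator {α : Fin n → ℕ | ∑ i, α i = m} φ α) :=
    hasSum_sum_of_ne_finset_zero h1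
  have h3 : (∑ α ∈ Finset.piAntidiag Finset.univ m,
      Set.indicator {α : Fin n → ℕ | ∑ i, α i = m} φ α)
      = ∑ α ∈ Finset.piAntidiag Finset.univ m, φ α := by
    refine Finset.sum_congr rfl fun α hα => ?_
    apply Set.indicator_of_mem
    simp only [Finset.mem_piAntidiag] at hα
    exact hα.1
  rw [h3] at h2
  exact (hasSum_subtype_iff_indicator (s := {α : Fin n → ℕ | ∑ i, α i = m})).2 h2

lemma sum_piAntidiag_smul' {n m : ℕ} (z : Fin n → ℂ) (x : X) :
    ∑ α ∈ Finset.piAntidiag Finset.univ m,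
      mono z α • (((Nat.multinomial Finset.univ α : ℕ) : ℂ) • x)
      = ((∑ i, z i) ^ m) • x := by
  classical
  rw [Finset.sum_pow_eq_sum_piAntidiag, Finset.sum_smul]
  refine Finset.sum_congr rfl fun α hα => ?_
  rw [smul_smul, mul_comm]
  rfl

lemma sum_piAntidiag_mul' {n m : ℕ} (r : Fin n → ℝ) :
    ∑ α ∈ Finset.piAntidiag Finset.univ m,
      ((Nat.multinomial Finset.univ α : ℕ) : ℝ) * monoR r α
      = (∑ i, r i) ^ m := by
  classical
  rw [Finset.sum_pow_eq_sum_piAntidiag]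
  rfl

lemma norm_mono' {n : ℕ} (z : Fin n → ℂ) (α : Fin n → ℕ) :
    ‖mono z α‖ = monoR (fun i => ‖z i‖) α := by
  simp [mono, monoR, norm_prod, norm_pow]

/-- The set whose sup is `KradiusDisk 1 lam U`. -/
def KSet (lam : ℝ) (U : X →L[ℂ] Y) : Set ℝ :=
  {r : ℝ | 0 ≤ r ∧ ∀ f a, RepresentsHolDisk f a → IsBoundedOnDisk f →
    ∀ F : Finset ℕ, ∑ m ∈ F, ‖U (a m)‖ ^ (1:ℝ) * r ^ ((m : ℝ) * (1:ℝ))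
      ≤ lam ^ (1:ℝ) * supNormDisk f ^ (1:ℝ)}

/-- The set whose sup is `Aradius (l1Ball n) 1 lam U`. -/
def ASet (n : ℕ) (lam : ℝ) (U : X →L[ℂ] Y) : Set ℝ :=
  {t : ℝ | ∃ r : Fin n → ℝ, (∀ i, 0 ≤ r i) ∧
    (∀ f a, RepresentsHol (l1Ball n) f a → IsBoundedOn (l1Ball n) f →
      ∀ F : Finset (Fin n → ℕ),
        ∑ α ∈ F, ‖U (a α)‖ ^ (1:ℝ) * monoR r α ^ (1:ℝ)
          ≤ lam ^ (1:ℝ) * supNorm (l1Ball n) f ^ (1:ℝ)) ∧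
    t = (∑ i, r i) / n}

lemma KradiusDisk_one (lam : ℝ) (U : X →L[ℂ] Y) :
    KradiusDisk 1 lam U = sSup (KSet lam U) := rfl

lemma Aradius_one (n : ℕ) (lam : ℝ) (U : X →L[ℂ] Y) :
    Aradius (l1Ball n) 1 lam U = sSup (ASet n lam U) := rfl

lemma zero_mem_KSet {lam : ℝ} (hlam : 1 ≤ lam) {U : X →L[ℂ] Y} (hUlam : ‖U‖ ≤ lam) :
    (0 : ℝ) ∈ KSet lam U := by
  refine ⟨le_refl 0, ?_⟩
  intro f a hrep hbdd F
  have ha0 : a 0 = f 0 := by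
    have h := hrep 0 (by norm_num)
    have heq : (fun m => (0:ℂ) ^ m • a m) = fun m => if m = 0 then a 0 else 0 := by
      funext m
      cases m with
      | zero => simp
      | succ k => simp [pow_succ]
    rw [heq] at h
    exact (hasSum_ite_eq 0 (a 0)).unique h
  simp only [Real.rpow_one]
  have hsum : ∀ m ∈ F, ‖U (a m)‖ * (0:ℝ) ^ ((m:ℝ) * 1) = if m = 0 then ‖U (a 0)‖ else 0 := by
    intro m _
    cases m with
    | zero => simp
    | succ k =>
        rw [if_neg (Nat.succ_ne_zero k), mul_one, Real.rpow_natCast,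
          zero_pow (Nat.succ_ne_zero k), mul_zero]
  rw [Finset.sum_congr rfl hsum, Finset.sum_ite_eq' F 0 (fun _ => ‖U (a 0)‖)]
  have hf0 : ‖f 0‖ ≤ supNormDisk f := norm_le_supNormDisk' hbdd (by norm_num)
  have h2 : ‖U (a 0)‖ ≤ lam * supNormDisk f := by
    rw [ha0]
    calc ‖U (f 0)‖ ≤ ‖U‖ * ‖f 0‖ := U.le_opNorm _
      _ ≤ lam * supNormDisk f := mul_le_mul hUlam hf0 (norm_nonneg _)
          (le_trans zero_le_one hlam)
  split
  · exact h2
  · exact le_trans (norm_nonneg _) h2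

lemma KSet_bddAbove {lam : ℝ} (hlam : 1 ≤ lam) {U : X →L[ℂ] Y} (hU : U ≠ 0) :
    BddAbove (KSet lam U) := by
  have hex : ∃ x : X, U x ≠ 0 := by
    by_contra hc
    push_neg at hc
    exact hU (ContinuousLinearMap.ext fun x => by simp [hc x])
  obtain ⟨x, hx⟩ := hex
  refine ⟨lam * ‖x‖ / ‖U x‖, ?_⟩
  rintro k ⟨hk0, hk⟩
  have hrep : RepresentsHolDisk (fun w : ℂ => w • x) (fun m => if m = 1 then x else 0) := by
    intro w _
    have heq : (fun m : ℕ => w ^ m • (if m = 1 then x else 0))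
        = fun m => if m = 1 then w • x else 0 := by
      funext m
      by_cases h : m = 1
      · subst h; simp
      · simp [h]
    rw [heq]
    exact hasSum_ite_eq 1 (w • x)
  have hbdd : IsBoundedOnDisk (fun w : ℂ => w • x) :=
    ⟨‖x‖, fun w hw => by
      rw [norm_smul]; exact mul_le_of_le_one_left (norm_nonneg x) hw.le⟩
  have hsup : supNormDisk (fun w : ℂ => w • x) ≤ ‖x‖ := by
    have : Nonempty {w : ℂ // ‖w‖ < 1} := ⟨⟨0, by norm_num⟩⟩
    exact ciSup_le fun w => by
      rw [norm_smul]; exact mul_le_of_le_one_left (norm_nonneg x) w.2.le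
  have h := hk _ _ hrep hbdd {1}
  simp only [Finset.sum_singleton, Real.rpow_one, if_pos rfl, Nat.cast_one, one_mul,
    Real.rpow_one] at h
  rw [le_div_iff₀ (norm_pos_iff.2 hx), mul_comm]
  calc ‖U x‖ * k ≤ lam * supNormDisk (fun w : ℂ => w • x) := h
    _ ≤ lam * ‖x‖ := mul_le_mul_of_nonneg_left hsup (le_trans zero_le_one hlam)

lemma div_mem_ASet {n : ℕ} (hn : 0 < n) {lam : ℝ} (hlam : 1 ≤ lam) {U : X →L[ℂ] Y}
    {k : ℝ} (hk : k ∈ KSet lam U) : k / n ∈ ASet n lam U := by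
  classical
  obtain ⟨hk0, hkP⟩ := hk
  set i0 : Fin n := ⟨0, hn⟩
  refine ⟨Pi.single i0 k, ?_, ?_, ?_⟩
  · intro i
    rcases eq_or_ne i i0 with rfl | h
    · simpa using hk0
    · simp [Pi.single_eq_of_ne h]
  · intro f a hrep hbdd F
    simp only [Real.rpow_one]
    have hmem : ∀ w : ℂ, ‖w‖ < 1 → (Pi.single i0 w : Fin n → ℂ) ∈ l1Ball n := by
      intro w hw
      show (∑ i, ‖(Pi.single i0 w : Fin n → ℂ) i‖) < 1
      have he : ∀ i, ‖(Pi.single i0 w : Fin n → ℂ) i‖ = (Pi.single i0 ‖w‖ : Fin n → ℝ) i := by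
        intro i
        rcases eq_or_ne i i0 with rfl | h
        · simp
        · simp [Pi.single_eq_of_ne h]
      rw [Finset.sum_congr rfl (fun i _ => he i), Finset.sum_pi_single']
      simpa using hw
    set g : ℂ → X := fun w => f (Pi.single i0 w) with hg
    set b : ℕ → X := fun m => a (Pi.single i0 m) with hb
    have hinj : Function.Injective (fun m : ℕ => (Pi.single i0 m : Fin n → ℕ)) := by
      intro m m' h
      have := congrFun h i0
      simpa using this
    have hrepg : RepresentsHolDisk g b := by
      intro w hw
      have h := hrep _ (hmem w hw)
      have h2 := (Function.Injective.hasSum_iff hinj ?_).2 h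
      · have heq : ((fun α => mono (Pi.single i0 w) α • a α) ∘ fun m : ℕ => Pi.single i0 m)
            = fun m => w ^ m • b m := by
          funext m
          simp only [Function.comp]
          congr 1
          show mono (Pi.single i0 w) (Pi.single i0 m) = w ^ m
          rw [mono, Finset.prod_eq_single i0]
          · simp
          · intro j _ hj
            simp [Pi.single_eq_of_ne hj]
          · intro h'
            exact absurd (Finset.mem_univ i0) h'
        rwa [heq] at h2
      · rintro α hα
        have hex : ∃ j, j ≠ i0 ∧ α j ≠ 0 := by
          by_contra hc
          push_neg at hc
          refine hα ⟨α i0, ?_⟩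
          funext j
          rcases eq_or_ne j i0 with rfl | h
          · simp
          · simp [Pi.single_eq_of_ne h, hc j h]
        obtain ⟨j, hj, hj0⟩ := hex
        have hz : mono (Pi.single i0 w) α = 0 := by
          rw [mono]
          apply Finset.prod_eq_zero (Finset.mem_univ j)
          rw [Pi.single_eq_of_ne hj]
          exact zero_pow hj0
        rw [hz, zero_smul]
    have hbddg : IsBoundedOnDisk g := by
      obtain ⟨M, hM⟩ := hbdd
      exact ⟨M, fun w hw => hM _ (hmem w hw)⟩
    have hsupg : supNormDisk g ≤ supNorm (l1Ball n) f := by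
      have : Nonempty {w : ℂ // ‖w‖ < 1} := ⟨⟨0, by norm_num⟩⟩
      exact ciSup_le fun w => norm_le_supNorm' hbdd (hmem w.1 w.2)
    set F' := F.filter (fun α : Fin n → ℕ => ∀ j, j ≠ i0 → α j = 0) with hF'
    have key := hkP g b hrepg hbddg (F'.image (fun α => α i0))
    simp only [Real.rpow_one, mul_one, Real.rpow_natCast] at key
    calc ∑ α ∈ F, ‖U (a α)‖ * monoR (Pi.single i0 k) α
        = ∑ α ∈ F', ‖U (a α)‖ * monoR (Pi.single i0 k) α := by
          rw [hF']
          refine (Finset.sum_filter_of_ne ?_).symm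
          intro α _ hne
          by_contra hc
          push_neg at hc
          obtain ⟨j, hj, hj0⟩ := hc
          apply hne
          have hz : monoR (Pi.single i0 k) α = 0 := by
            rw [monoR]
            apply Finset.prod_eq_zero (Finset.mem_univ j)
            rw [Pi.single_eq_of_ne hj]
            exact zero_pow hj0
          rw [hz, mul_zero]
      _ = ∑ m ∈ F'.image (fun α => α i0), ‖U (b m)‖ * k ^ m := by
          rw [Finset.sum_image ?_]
          · refine Finset.sum_congr rfl fun α hα => ?_
            have hα' := (Finset.mem_filter.1 hα).2
            have hα2 : α = Pi.single i0 (α i0) := by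
              funext j
              rcases eq_or_ne j i0 with rfl | h
              · simp
              · simp [Pi.single_eq_of_ne h, hα' j h]
            congr 1
            · rw [hb]
              conv_lhs => rw [hα2]
            · rw [monoR, Finset.prod_eq_single i0]
              · simp
              · intro j _ hj
                rw [Pi.single_eq_of_ne hj, hα' j hj, pow_zero]
              · intro h'
                exact absurd (Finset.mem_univ i0) h'
          · intro α hα β hβ h
            have hα' := (Finset.mem_filter.1 hα).2
            have hβ' := (Finset.mem_filter.1 hβ).2
            funext j
            rcases eq_or_ne j i0 with rfl | hj
            · exact h
            · rw [hα' j hj, hβ' j hj]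
      _ ≤ lam * supNormDisk g := key
      _ ≤ lam * supNorm (l1Ball n) f :=
          mul_le_mul_of_nonneg_left hsupg (le_trans zero_le_one hlam)
  · rw [Finset.sum_pi_single']
    simp

lemma ASet_subset {n : ℕ} {lam : ℝ} (hlam : 1 ≤ lam) {U : X →L[ℂ] Y}
    {t : ℝ} (ht : t ∈ ASet n lam U) : ∃ k ∈ KSet lam U, t = k / n := by
  classical
  obtain ⟨r, hr0, hgood, rfl⟩ := ht
  refine ⟨∑ i, r i, ⟨Finset.sum_nonneg fun i _ => hr0 i, ?_⟩, rfl⟩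
  intro g a hrep hbdd F
  set k : ℝ := ∑ i, r i with hkdef
  set A : (Fin n → ℕ) → X :=
    fun α => ((Nat.multinomial Finset.univ α : ℕ) : ℂ) • a (∑ i, α i) with hA
  set f : (Fin n → ℂ) → X := fun z => g (∑ i, z i) with hf
  have hrepf : RepresentsHol (l1Ball n) f A := by
    intro z hz
    set c : ℝ := ∑ i, ‖z i‖ with hc
    have hc0 : (0:ℝ) ≤ c := Finset.sum_nonneg fun i _ => norm_nonneg _
    have hc1 : c < 1 := hz
    set t0 : ℝ := (c + 1) / 2 with ht0
    have ht0c : c < t0 := by rw [ht0]; linarith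
    have ht0pos : 0 < t0 := by rw [ht0]; linarith
    have ht01 : t0 < 1 := by rw [ht0]; linarith
    have hsumt0 : Summable (fun m => ((t0 : ℂ)) ^ m • a m) := by
      refine ⟨_, hrep (t0 : ℂ) ?_⟩
      rw [Complex.norm_real, Real.norm_eq_abs, abs_of_pos ht0pos]
      exact ht01
    obtain ⟨C, hC⟩ : ∃ C : ℝ, ∀ m, t0 ^ m * ‖a m‖ ≤ C := by
      have h1 : Filter.Tendsto (fun m => ‖((t0 : ℂ)) ^ m • a m‖) Filter.atTop (nhds 0) := by
        simpa using hsumt0.tendsto_atTop_zero.norm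
      obtain ⟨C, hC⟩ := h1.bddAbove_range
      refine ⟨C, fun m => ?_⟩
      have h2 := hC (Set.mem_range_self m)
      rwa [norm_smul, norm_pow, Complex.norm_real, Real.norm_eq_abs, abs_of_pos ht0pos] at h2
    have hψ : ∀ m : ℕ, ∀ α ∈ Finset.piAntidiag (Finset.univ : Finset (Fin n)) m,
        ‖mono z α • A α‖
          = ((Nat.multinomial Finset.univ α : ℕ) : ℝ) * monoR (fun i => ‖z i‖) α * ‖a m‖ := by
      intro m α hα
      have hm := (Finset.mem_piAntidiag.1 hα).1
      rw [hA]
      simp only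
      rw [hm, norm_smul, norm_smul, norm_mono', Complex.norm_natCast]
      ring
    have hfibR : ∀ m : ℕ,
        HasSum (fun α : {α : Fin n → ℕ // ∑ i, α i = m} => ‖mono z α.1 • A α.1‖)
          (c ^ m * ‖a m‖) := by
      intro m
      have h := hasSum_fiber' (n := n) (m := m) (fun α => ‖mono z α • A α‖)
      have heq : (∑ α ∈ Finset.piAntidiag Finset.univ m, ‖mono z α • A α‖)
          = c ^ m * ‖a m‖ := by
        rw [Finset.sum_congr rfl (hψ m), ← Finset.sum_mul, sum_piAntidiag_mul']
      rwa [heq] at h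
    have hsummable : Summable (fun α : Fin n → ℕ => ‖mono z α • A α‖) := by
      rw [← (Equiv.sigmaFiberEquiv (fun α : Fin n → ℕ => ∑ i, α i)).summable_iff]
      have hS : Summable (fun m : ℕ => c ^ m * ‖a m‖) := by
        refine Summable.of_nonneg_of_le
          (fun m => mul_nonneg (pow_nonneg hc0 m) (norm_nonneg _)) (fun m => ?_)
          ((summable_geometric_of_lt_one (div_nonneg hc0 ht0pos.le)
            ((div_lt_one ht0pos).2 ht0c)).mul_right C)
        have heq2 : c ^ m * ‖a m‖ = (c / t0) ^ m * (t0 ^ m * ‖a m‖) := by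
          rw [div_pow]
          field_simp
        rw [heq2]
        exact mul_le_mul_of_nonneg_left (hC m) (pow_nonneg (div_nonneg hc0 ht0pos.le) m)
      exact (summable_sigma_of_nonneg fun σ => norm_nonneg _).2
        ⟨fun m => (hfibR m).summable, hS.congr (fun m => ((hfibR m).tsum_eq).symm)⟩
    have hw1 : ‖∑ i, z i‖ < 1 := lt_of_le_of_lt (norm_sum_le _ _) hc1
    have hfib : ∀ m : ℕ,
        HasSum (fun α : {α : Fin n → ℕ // ∑ i, α i = m} => mono z α.1 • A α.1)
          (((∑ i, z i) ^ m) • a m) := by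
      intro m
      have h := hasSum_fiber' (n := n) (m := m) (fun α => mono z α • A α)
      have heq : (∑ α ∈ Finset.piAntidiag Finset.univ m, mono z α • A α)
          = ((∑ i, z i) ^ m) • a m := by
        rw [← sum_piAntidiag_smul' z (a m)]
        refine Finset.sum_congr rfl fun α hα => ?_
        rw [hA]
        simp only
        rw [(Finset.mem_piAntidiag.1 hα).1]
      rwa [heq] at h
    show HasSum (fun α => mono z α • A α) (g (∑ i, z i))
    rw [← (Equiv.sigmaFiberEquiv (fun α : Fin n → ℕ => ∑ i, α i)).hasSum_iff]
    exact HasSum.sigma_of_hasSum (hrep _ hw1) hfib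
      (((Equiv.sigmaFiberEquiv _).summable_iff).2 (Summable.of_norm hsummable))
  have hbddf : IsBoundedOn (l1Ball n) f := by
    obtain ⟨M, hM⟩ := hbdd
    exact ⟨M, fun z hz => hM _ (lt_of_le_of_lt (norm_sum_le _ _) hz)⟩
  have hsupf : supNorm (l1Ball n) f ≤ supNormDisk g := by
    have : Nonempty (l1Ball n) := ⟨⟨0, by simp [l1Ball]⟩⟩
    exact ciSup_le fun z => norm_le_supNormDisk' hbdd (lt_of_le_of_lt (norm_sum_le _ _) z.2)
  have key := hgood f A hrepf hbddf (F.biUnion (fun m => Finset.piAntidiag Finset.univ m))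
  simp only [Real.rpow_one] at key ⊢
  have hdisj : (↑F : Set ℕ).PairwiseDisjoint
      (fun m => Finset.piAntidiag (Finset.univ : Finset (Fin n)) m) := by
    intro m1 _ m2 _ hne
    refine Finset.disjoint_left.2 fun α h1 h2 => ?_
    exact hne ((Finset.mem_piAntidiag.1 h1).1.symm.trans (Finset.mem_piAntidiag.1 h2).1)
  rw [Finset.sum_biUnion hdisj] at key
  have hinner : ∀ m ∈ F,
      (∑ α ∈ Finset.piAntidiag Finset.univ m, ‖U (A α)‖ * monoR r α)
        = ‖U (a m)‖ * k ^ m := by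
    intro m _
    have hterm : ∀ α ∈ Finset.piAntidiag (Finset.univ : Finset (Fin n)) m,
        ‖U (A α)‖ * monoR r α
          = ‖U (a m)‖ * (((Nat.multinomial Finset.univ α : ℕ) : ℝ) * monoR r α) := by
      intro α hα
      rw [hA]
      simp only
      rw [(Finset.mem_piAntidiag.1 hα).1, map_smul, norm_smul, Complex.norm_natCast]
      ring
    rw [Finset.sum_congr rfl hterm, ← Finset.mul_sum, sum_piAntidiag_mul']
  rw [Finset.sum_congr rfl hinner] at key
  calc ∑ m ∈ F, ‖U (a m)‖ * k ^ ((m : ℝ) * 1)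
      = ∑ m ∈ F, ‖U (a m)‖ * k ^ m := by
        refine Finset.sum_congr rfl fun m _ => ?_
        rw [mul_one, Real.rpow_natCast]
    _ ≤ lam * supNorm (l1Ball n) f := key
    _ ≤ lam * supNormDisk g := by
        exact mul_le_mul_of_nonneg_left hsupf (le_trans zero_le_one hlam)

end Cor19Aux

end ArithBohr

namespace ArithBohr

/-- Corollary `cor-1.8-a`: `A_λ(B_{ℓ^n_1},1,U) = K_λ(𝔻,1,U)/n`. -/
theorem statement19
    {X : Type*} [NormedAddCommGroup X] [NormedSpace ℂ X] [CompleteSpace X]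
    {Y : Type*} [NormedAddCommGroup Y] [NormedSpace ℂ Y] [CompleteSpace Y]
    (U : X →L[ℂ] Y) (hU : U ≠ 0)
    (lam : ℝ) (hlam : 1 ≤ lam) (hUlam : ‖U‖ < lam) :
    ∀ n : ℕ, 0 < n →
      Aradius (l1Ball n) 1 lam U = KradiusDisk 1 lam U / n := by
  intro n hn
  have hlam0 : (0:ℝ) ≤ lam := le_trans zero_le_one hlam
  have hKne : (KSet lam U).Nonempty := ⟨0, zero_mem_KSet hlam hUlam.le⟩
  have hKbdd : BddAbove (KSet lam U) := KSet_bddAbove hlam hU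
  have hset : ASet n lam U = (fun k => k / (n:ℝ)) '' (KSet lam U) := by
    apply Set.Subset.antisymm
    · intro t ht
      obtain ⟨kk, hkk, hteq⟩ := ASet_subset hlam ht
      exact ⟨kk, hkk, hteq.symm⟩
    · rintro _ ⟨kk, hkk, rfl⟩
      exact div_mem_ASet hn hlam hkk
  rw [Aradius_one, KradiusDisk_one, hset]
  have hn' : (0:ℝ) < n := Nat.cast_pos.2 hn
  have himne : ((fun k => k / (n:ℝ)) '' (KSet lam U)).Nonempty := hKne.image _
  have himbdd : BddAbove ((fun k => k / (n:ℝ)) '' (KSet lam U)) := by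
    obtain ⟨B, hB⟩ := hKbdd
    refine ⟨B / n, ?_⟩
    rintro _ ⟨kk, hkk, rfl⟩
    exact (div_le_div_iff_of_pos_right hn').2 (hB hkk)
  apply le_antisymm
  · refine csSup_le himne ?_
    rintro _ ⟨kk, hkk, rfl⟩
    exact (div_le_div_iff_of_pos_right hn').2 (le_csSup hKbdd hkk)
  · rw [div_le_iff₀ hn']
    refine csSup_le hKne fun kk hkk => ?_
    have h1 : kk / n ≤ sSup ((fun k => k / (n:ℝ)) '' (KSet lam U)) :=
      le_csSup himbdd ⟨kk, hkk, rfl⟩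
    calc kk = (kk / n) * n := by field_simp
      _ ≤ _ := mul_le_mul_of_nonneg_right h1 hn'.le


end ArithBohr
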